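/- Let V be a 2n-dimensional real symplectic vector space. For h ≤ n, the map L^{n-h} restricts to a linear isomorphism from the primitive h-covectors P^h onto {γ ∈ Λ^{2n-h} V* : L γ = 0}. -/

import Mathlib

set_option synthInstance.maxHeartbeats 1000000
set_option maxHeartbeats 1000000

open ExteriorAlgebra

/-- The space of `h`-covectors `Λ^h V*`, realized as the degree-`h` piece of the
exterior algebra of the dual space. -/
noncomputable def gradePiece (V : Type) [AddCommGroup V] [Module ℝ V] (h : ℕ) :
    Submodule ℝ (ExteriorAlgebra ℝ (Module.Dual ℝ V)) :=
  (LinearMap.range (ι ℝ : Module.Dual ℝ V →ₗ[ℝ] ExteriorAlgebra ℝ (Module.Dual ℝ V))) ^ h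

/-!
Write `e₁, …, eₙ, f₁, …, fₙ` for the basis `b`, so `ω = ∑ᵢ eᵢ ∧ fᵢ`, and let
`Λ = ∑ᵢ ι_{fᵢ*} ι_{eᵢ*}` be the contraction with the dual bivector. On `k`-covectors
`[Λ, L] = n - k`, so `L` and `Λ` generate an `sl₂`-action, and iterating the commutator gives
`Λ (L^(j+1) x) = L^(j+1) (Λ x) + (j+1)(n-k-j) L^j x`. If `L^(j+1) x = 0`, this forces
`L^(j+2) (Λ x) = 0`, hence `Λ x = 0` by induction on the degree, and then `L^j x = 0`; so `L^j`
is injective on `k`-covectors whenever `j + k ≤ n`. Dually, if `L γ = 0` with `γ` of degree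
`h + 2d`, `h + d = n`, then `L (Λ^(r+1) γ) = (r+1)(d-r) Λ^r γ`, so `L^d (Λ^d γ) = (d!)² γ`
and `Λ^d γ / (d!)²` is a primitive preimage of `γ`.
-/

theorem Fin.natAdd_ne_castAdd {n : ℕ} (i j : Fin n) : Fin.natAdd n i ≠ Fin.castAdd n j := by
  simp [Fin.ext_iff]
  omega

namespace ExteriorAlgebra

variable {R M : Type*} [CommRing R] [AddCommGroup M] [Module R M]

local infixr:70 " ⌋ " => CliffordAlgebra.contractLeft (R := R) (M := M) (Q := 0)

theorem contractLeft_eq_zero_of_mem_exteriorPower_zero (d : Module.Dual R M)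
    {x : ExteriorAlgebra R M} (hx : x ∈ ⋀[R]^0 M) : d ⌋ x = 0 := by
  rw [exteriorPower, pow_zero, Submodule.mem_one] at hx
  obtain ⟨r, rfl⟩ := hx
  exact CliffordAlgebra.contractLeft_algebraMap _ _ _

theorem ι_mem_exteriorPower_one (v : M) : ι R v ∈ ⋀[R]^1 M := by
  rw [exteriorPower, pow_one]
  exact LinearMap.mem_range_self _ v

theorem contractLeft_mem_exteriorPower (d : Module.Dual R M) {k : ℕ}
    {x : ExteriorAlgebra R M} (hx : x ∈ ⋀[R]^(k + 1) M) : d ⌋ x ∈ ⋀[R]^k M := by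
  suffices ∀ i, ∀ x ∈ ⋀[R]^i M, d ⌋ x ∈ ⋀[R]^(i - 1) M from this _ x hx
  intro i x hx
  induction hx using Submodule.pow_induction_on_left' with
  | algebraMap r => simp [CliffordAlgebra.contractLeft_algebraMap]
  | add x y i _ _ hx hy => rw [map_add]; exact Submodule.add_mem _ hx hy
  | mem_mul m hm i y hy ih =>
    obtain ⟨v, rfl⟩ := hm
    rw [CliffordAlgebra.contractLeft_ι_mul]
    refine Submodule.sub_mem _ (Submodule.smul_mem _ _ (by simpa using hy)) ?_
    rcases i with _ | i
    · rw [contractLeft_eq_zero_of_mem_exteriorPower_zero d hy, mul_zero]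
      exact zero_mem _
    · simpa [add_comm 1] using SetLike.mul_mem_graded (ι_mem_exteriorPower_one v) ih

theorem contractLeft_ι_mul_ι_mul (d : Module.Dual R M) (u w : M) (x : ExteriorAlgebra R M) :
    d ⌋ (ι R u * ι R w * x) =
      d u • (ι R w * x) - d w • (ι R u * x) + ι R u * ι R w * (d ⌋ x) := by
  rw [mul_assoc, CliffordAlgebra.contractLeft_ι_mul, CliffordAlgebra.contractLeft_ι_mul,
    mul_sub, mul_smul_comm]
  noncomm_ring

section numberOp

variable {I : Type*} [Fintype I]

noncomputable def numberOp (b : Module.Basis I R M) : Module.End R (ExteriorAlgebra R M) :=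
  ∑ j, LinearMap.mulLeft R (ι R (b j)) ∘ₗ CliffordAlgebra.contractLeft (b.coord j)

theorem numberOp_ι_mul (b : Module.Basis I R M) (v : M) (x : ExteriorAlgebra R M) :
    numberOp b (ι R v * x) = ι R v * x + ι R v * numberOp b x := by
  have expand : ∑ j, b.coord j v • ι R (b j) = ι R v := by
    simp_rw [← map_smul, ← map_sum, Module.Basis.coord_apply, b.sum_repr]
  have anticomm (w : M) : ι R w * ι R v = -(ι R v * ι R w) :=
    eq_neg_of_add_eq_zero_left (ι_add_mul_swap w v)
  simp only [numberOp, LinearMap.sum_apply, LinearMap.comp_apply, LinearMap.mulLeft_apply,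
    CliffordAlgebra.contractLeft_ι_mul, mul_sub, mul_smul_comm, ← mul_assoc, anticomm,
    neg_mul, sub_neg_eq_add, Finset.sum_add_distrib, ← smul_mul_assoc, ← Finset.sum_mul, expand,
    Finset.mul_sum]

theorem numberOp_apply_of_mem_exteriorPower (b : Module.Basis I R M) {k : ℕ}
    {x : ExteriorAlgebra R M} (hx : x ∈ ⋀[R]^k M) : numberOp b x = (k : R) • x := by
  induction hx using Submodule.pow_induction_on_left' with
  | algebraMap r => simp [numberOp, CliffordAlgebra.contractLeft_algebraMap]
  | add x y i _ _ hx hy => rw [map_add, hx, hy, smul_add]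
  | mem_mul m hm i x hx ih =>
    obtain ⟨v, rfl⟩ := hm
    rw [numberOp_ι_mul, ih, mul_smul_comm, Nat.cast_succ, add_smul, one_smul, add_comm]

end numberOp

section symplectic

variable {n : ℕ} (b : Module.Basis (Fin (n + n)) R M)

noncomputable def symplecticForm : ExteriorAlgebra R M :=
  ∑ i : Fin n, ι R (b (Fin.castAdd n i)) * ι R (b (Fin.natAdd n i))

noncomputable def dualLefschetz : Module.End R (ExteriorAlgebra R M) :=
  ∑ i : Fin n, CliffordAlgebra.contractLeft (b.coord (Fin.natAdd n i)) ∘ₗ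
    CliffordAlgebra.contractLeft (b.coord (Fin.castAdd n i))

theorem contractLeft_coord_castAdd_symplecticForm_mul (j : Fin n) (x : ExteriorAlgebra R M) :
    b.coord (Fin.castAdd n j) ⌋ (symplecticForm b * x) =
      ι R (b (Fin.natAdd n j)) * x + symplecticForm b * (b.coord (Fin.castAdd n j) ⌋ x) := by
  simp only [symplecticForm, Finset.sum_mul, map_sum, contractLeft_ι_mul_ι_mul,
    Module.Basis.coord_apply, Module.Basis.repr_self, Finsupp.single_apply, Fin.castAdd_inj,
    Fin.natAdd_ne_castAdd, if_false, ite_smul, one_smul, zero_smul, sub_zero,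
    Finset.sum_add_distrib, Finset.sum_ite_eq', Finset.mem_univ, if_true]

theorem contractLeft_coord_natAdd_symplecticForm_mul (j : Fin n) (x : ExteriorAlgebra R M) :
    b.coord (Fin.natAdd n j) ⌋ (symplecticForm b * x) =
      -(ι R (b (Fin.castAdd n j)) * x) + symplecticForm b * (b.coord (Fin.natAdd n j) ⌋ x) := by
  simp only [symplecticForm, Finset.sum_mul, map_sum, contractLeft_ι_mul_ι_mul,
    Module.Basis.coord_apply, Module.Basis.repr_self, Finsupp.single_apply, Fin.natAdd_inj,
    (Fin.natAdd_ne_castAdd _ _).symm, if_false, ite_smul, one_smul, zero_smul, zero_sub,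
    Finset.sum_add_distrib, Finset.sum_neg_distrib, Finset.sum_ite_eq', Finset.mem_univ, if_true]

theorem dualLefschetz_symplecticForm_mul (x : ExteriorAlgebra R M) :
    dualLefschetz b (symplecticForm b * x) =
      symplecticForm b * dualLefschetz b x + (n : R) • x - numberOp b x := by
  simp only [dualLefschetz, numberOp, LinearMap.sum_apply, LinearMap.comp_apply,
    LinearMap.mulLeft_apply, contractLeft_coord_castAdd_symplecticForm_mul, map_add,
    contractLeft_coord_natAdd_symplecticForm_mul, CliffordAlgebra.contractLeft_ι_mul,
    Module.Basis.coord_apply, Module.Basis.repr_self, Finsupp.single_eq_same, one_smul,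
    Fin.sum_univ_add, LinearMap.add_apply, Finset.sum_add_distrib, Finset.sum_sub_distrib,
    Finset.sum_neg_distrib, Finset.sum_const, Finset.card_univ, Fintype.card_fin, Finset.mul_sum]
  rw [Nat.cast_smul_eq_nsmul]
  abel

theorem symplecticForm_mem_exteriorPower : symplecticForm b ∈ ⋀[R]^2 M :=
  Submodule.sum_mem _ fun _ _ =>
    SetLike.mul_mem_graded (ι_mem_exteriorPower_one _) (ι_mem_exteriorPower_one _)

theorem symplecticForm_pow_mul_mem_exteriorPower (r : ℕ) {k : ℕ} {x : ExteriorAlgebra R M}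
    (hx : x ∈ ⋀[R]^k M) : symplecticForm b ^ r * x ∈ ⋀[R]^(2 * r + k) M := by
  refine SetLike.mul_mem_graded ?_ hx
  simpa [mul_comm] using SetLike.pow_mem_graded r (symplecticForm_mem_exteriorPower b)

theorem dualLefschetz_mem_exteriorPower {k : ℕ} {x : ExteriorAlgebra R M}
    (hx : x ∈ ⋀[R]^(k + 2) M) : dualLefschetz b x ∈ ⋀[R]^k M := by
  rw [dualLefschetz, LinearMap.sum_apply]
  exact Submodule.sum_mem _ fun _ _ =>
    contractLeft_mem_exteriorPower _ (contractLeft_mem_exteriorPower _ hx)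

theorem dualLefschetz_pow_mem_exteriorPower (r : ℕ) {k : ℕ} {x : ExteriorAlgebra R M}
    (hx : x ∈ ⋀[R]^(k + 2 * r) M) : (dualLefschetz b ^ r) x ∈ ⋀[R]^k M := by
  induction r generalizing x with
  | zero => simpa using hx
  | succ r ih =>
    rw [pow_succ, Module.End.mul_apply]
    exact ih (dualLefschetz_mem_exteriorPower b (by rwa [mul_add_one, ← add_assoc] at hx))

theorem dualLefschetz_eq_zero_of_mem_exteriorPower {k : ℕ} (hk : k < 2)
    {x : ExteriorAlgebra R M} (hx : x ∈ ⋀[R]^k M) : dualLefschetz b x = 0 := by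
  rw [dualLefschetz, LinearMap.sum_apply]
  refine Finset.sum_eq_zero fun i _ => ?_
  interval_cases k
  · rw [LinearMap.comp_apply, contractLeft_eq_zero_of_mem_exteriorPower_zero _ hx, map_zero]
  · exact contractLeft_eq_zero_of_mem_exteriorPower_zero _
      (contractLeft_mem_exteriorPower _ (k := 0) hx)

theorem dualLefschetz_symplecticForm_mul_of_mem_exteriorPower {k : ℕ}
    {x : ExteriorAlgebra R M} (hx : x ∈ ⋀[R]^k M) :
    dualLefschetz b (symplecticForm b * x) =
      symplecticForm b * dualLefschetz b x + ((n : R) - k) • x := by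
  rw [dualLefschetz_symplecticForm_mul, numberOp_apply_of_mem_exteriorPower b hx, sub_smul,
    add_sub_assoc]

theorem dualLefschetz_symplecticForm_pow_succ_mul {k : ℕ} {x : ExteriorAlgebra R M}
    (hx : x ∈ ⋀[R]^k M) (r : ℕ) :
    dualLefschetz b (symplecticForm b ^ (r + 1) * x) =
      symplecticForm b ^ (r + 1) * dualLefschetz b x +
        (((r : R) + 1) * ((n : R) - k - r)) • (symplecticForm b ^ r * x) := by
  induction r with
  | zero =>
    rw [pow_one, pow_zero, one_mul, dualLefschetz_symplecticForm_mul_of_mem_exteriorPower b hx]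
    push_cast
    module
  | succ r ih =>
    rw [pow_succ' _ (r + 1), mul_assoc, dualLefschetz_symplecticForm_mul_of_mem_exteriorPower b
      (symplecticForm_pow_mul_mem_exteriorPower b (r + 1) hx), ih, mul_add, mul_smul_comm,
      ← mul_assoc, ← mul_assoc, ← pow_succ', ← pow_succ']
    push_cast
    module

theorem symplecticForm_mul_dualLefschetz_pow_succ {k r : ℕ} {x : ExteriorAlgebra R M}
    (hx : x ∈ ⋀[R]^(k + 2 * r) M) (hωx : symplecticForm b * x = 0) :
    symplecticForm b * (dualLefschetz b ^ (r + 1)) x =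
      (((r : R) + 1) * ((k : R) + r - n)) • (dualLefschetz b ^ r) x := by
  have commute {k : ℕ} {y : ExteriorAlgebra R M} (hy : y ∈ ⋀[R]^k M) :
      symplecticForm b * dualLefschetz b y =
        dualLefschetz b (symplecticForm b * y) + ((k : R) - n) • y := by
    rw [dualLefschetz_symplecticForm_mul_of_mem_exteriorPower b hy]
    module
  induction r generalizing k with
  | zero => simpa [hωx] using commute hx
  | succ r ih =>
    have hx' : x ∈ ⋀[R]^(k + 2 + 2 * r) M := by convert hx using 2; ring
    rw [pow_succ', Module.End.mul_apply,
      commute (dualLefschetz_pow_mem_exteriorPower b (r + 1) hx), ih hx', map_smul,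
      ← Module.End.mul_apply, ← pow_succ']
    push_cast
    module

theorem symplecticForm_pow_mul_dualLefschetz_pow {h d : ℕ} (hn : h + d = n)
    {x : ExteriorAlgebra R M} (hx : x ∈ ⋀[R]^(h + 2 * d) M) (hωx : symplecticForm b * x = 0)
    {r : ℕ} (hr : r ≤ d) :
    symplecticForm b ^ r * (dualLefschetz b ^ r) x =
      ((r.factorial * d.descFactorial r : ℕ) : R) • x := by
  induction r with
  | zero => simp
  | succ r ih =>
    have hx' : x ∈ ⋀[R]^(h + 2 * (d - r) + 2 * r) M := by convert hx using 2; omega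
    rw [pow_succ, mul_assoc, symplecticForm_mul_dualLefschetz_pow_succ b hx' hωx, mul_smul_comm,
      ih (by omega), smul_smul, Nat.factorial_succ, Nat.descFactorial_succ, ← hn]
    congr 1
    push_cast [Nat.cast_sub (by omega : r ≤ d)]
    ring

end symplectic

section field

variable {K V : Type*} [Field K] [CharZero K] [AddCommGroup V] [Module K V] {n : ℕ}
  (b : Module.Basis (Fin (n + n)) K V)

theorem eq_zero_of_symplecticForm_pow_mul_eq_zero {k : ℕ} {x : ExteriorAlgebra K V}
    (hx : x ∈ ⋀[K]^k V) {j : ℕ} (hjk : j + k ≤ n) (h : symplecticForm b ^ j * x = 0) :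
    x = 0 := by
  induction k using Nat.strong_induction_on generalizing j x with | _ k ihk =>
  induction j with
  | zero => simpa using h
  | succ j ihj =>
    have key := dualLefschetz_symplecticForm_pow_succ_mul b hx j
    rw [h, map_zero, eq_comm] at key
    set c : K := ((j : K) + 1) * ((n : K) - k - j)
    have hΛx : dualLefschetz b x = 0 := by
      rcases lt_or_ge k 2 with hk | hk
      · exact dualLefschetz_eq_zero_of_mem_exteriorPower b hk hx
      obtain ⟨k, rfl⟩ := Nat.exists_eq_add_of_le' hk
      refine ihk k (by omega) (dualLefschetz_mem_exteriorPower b hx) (j := j + 2) (by omega) ?_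
      rw [pow_succ', mul_assoc, eq_neg_of_add_eq_zero_left key, mul_neg, mul_smul_comm,
        ← mul_assoc, ← pow_succ', h, smul_zero, neg_zero]
    have hc : c ≠ 0 := by
      refine mul_ne_zero (Nat.cast_add_one_ne_zero j) ?_
      rw [sub_sub, sub_ne_zero]
      exact_mod_cast (by omega : n ≠ k + j)
    rw [hΛx, mul_zero, zero_add, smul_eq_zero] at key
    exact ihj (by omega) (key.resolve_left hc)

end field

end ExteriorAlgebra

theorem lefschetz_power_bijOn_primitive_general (n : ℕ) (V : Type) [AddCommGroup V] [Module ℝ V]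
    (b : Module.Basis (Fin (n + n)) ℝ (Module.Dual ℝ V))
    (ω : ExteriorAlgebra ℝ (Module.Dual ℝ V))
    (hω : ω = ∑ i : Fin n, ι ℝ (b (Fin.castAdd n i)) * ι ℝ (b (Fin.natAdd n i)))
    (h : ℕ) (hh : h ≤ n) :
    Set.BijOn (fun x => ω ^ (n - h) * x)
      {α | α ∈ gradePiece V h ∧ ω ^ (n - h + 1) * α = 0}
      {γ | γ ∈ gradePiece V (2 * n - h) ∧ ω * γ = 0} := by
  obtain rfl : ω = symplecticForm b := hω
  have hn : h + (n - h) = n := by omega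
  have hdeg : 2 * n - h = h + 2 * (n - h) := by omega
  refine ⟨fun α hα => ⟨?_, ?_⟩, fun x hx y hy hxy => ?_, fun γ hγ => ?_⟩
  · rw [hdeg, add_comm]
    exact symplecticForm_pow_mul_mem_exteriorPower b (n - h) hα.1
  · rw [← mul_assoc, ← pow_succ']
    exact hα.2
  · rw [← sub_eq_zero]
    refine eq_zero_of_symplecticForm_pow_mul_eq_zero b (sub_mem hx.1 hy.1) (j := n - h)
      (by omega) ?_
    rw [mul_sub, sub_eq_zero]
    exact hxy
  · obtain ⟨hγ, hωγ⟩ := hγ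
    rw [hdeg] at hγ
    have key := symplecticForm_pow_mul_dualLefschetz_pow b hn hγ hωγ le_rfl
    set c : ℝ := (((n - h).factorial * (n - h).descFactorial (n - h) : ℕ) : ℝ)
    have hc : c ≠ 0 := by simp [c, Nat.descFactorial_self, Nat.factorial_ne_zero]
    refine ⟨c⁻¹ • (dualLefschetz b ^ (n - h)) γ,
      ⟨Submodule.smul_mem _ _ (dualLefschetz_pow_mem_exteriorPower b _ hγ), ?_⟩, ?_⟩
    · rw [pow_succ', mul_assoc, mul_smul_comm, key, smul_smul, inv_mul_cancel₀ hc, one_smul,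
        hωγ]
    · dsimp only
      rw [mul_smul_comm, key, smul_smul, inv_mul_cancel₀ hc, one_smul]

/-- **Lefschetz isomorphism onto the kernel of `L`.** Let `V` be a `2n`-dimensional real
symplectic vector space with symplectic form `ω` (written in a symplectic basis) and
Lefschetz operator `L α = ω ∧ α`. For `h ≤ n`, the map `L^(n-h)` restricts to a linear
isomorphism from the primitive `h`-covectors
`P^h = {α ∈ Λ^h V* : L^(n-h+1) α = 0}` onto `{γ ∈ Λ^(2n-h) V* : L γ = 0}`. -/
theorem lefschetz_power_bijOn_primitive (n : ℕ) (V : Type) [AddCommGroup V] [Module ℝ V]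
    [FiniteDimensional ℝ V] (hdim : Module.finrank ℝ V = 2 * n)
    (b : Module.Basis (Fin (n + n)) ℝ (Module.Dual ℝ V))
    (ω : ExteriorAlgebra ℝ (Module.Dual ℝ V))
    (hω : ω = ∑ i : Fin n, ι ℝ (b (Fin.castAdd n i)) * ι ℝ (b (Fin.natAdd n i)))
    (h : ℕ) (hh : h ≤ n) :
    Set.BijOn (fun x => ω ^ (n - h) * x)
      {α | α ∈ gradePiece V h ∧ ω ^ (n - h + 1) * α = 0}
      {γ | γ ∈ gradePiece V (2 * n - h) ∧ ω * γ = 0} :=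
  lefschetz_power_bijOn_primitive_general n V b ω hω h hh
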